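/- Let H be a VE-space over a topologically ordered *-space Z, T : H → H a positive selfadjoint linear operator, and p an increasing seminorm on Z. Assume T is m-topologisable for p, i.e., there exist a constant D ≥ 0 and a function r : H → [0,∞) such that p([Tⁿh, Tⁿh])^{1/2} ≤ Dⁿ r(h) for all n ∈ ℕ and all h ∈ H. Then p([Th, h]) ≤ D · p([h, h]) for all h ∈ H. -/

import Mathlib

/-- An ordered *-space: a complex vector space with a conjugate-linear involution
and a strict cone of selfadjoint elements. The order is `x ≤ y ↔ y - x ∈ pos`. -/
structure OrderedStarSpace (Z : Type*) [AddCommGroup Z] [Module ℂ Z] where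
  star : Z → Z
  star_add : ∀ x y : Z, star (x + y) = star x + star y
  star_smul : ∀ (c : ℂ) (x : Z), star (c • x) = (starRingEnd ℂ) c • star x
  star_involutive : ∀ x : Z, star (star x) = x
  pos : Set Z
  pos_add : ∀ x ∈ pos, ∀ y ∈ pos, x + y ∈ pos
  pos_smul : ∀ (r : ℝ), 0 ≤ r → ∀ x ∈ pos, (r : ℂ) • x ∈ pos
  pos_strict : ∀ x ∈ pos, -x ∈ pos → x = 0
  pos_selfadjoint : ∀ x ∈ pos, star x = x

/-- A `Z`-valued gramian making `E` a VE-space over the ordered *-space `Z`. -/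
structure VEGramian {Z : Type*} [AddCommGroup Z] [Module ℂ Z]
    (O : OrderedStarSpace Z) (E : Type*) [AddCommGroup E] [Module ℂ E] where
  ip : E → E → Z
  add_right : ∀ x y z : E, ip x (y + z) = ip x y + ip x z
  smul_right : ∀ (c : ℂ) (x y : E), ip x (c • y) = c • ip x y
  herm : ∀ x y : E, ip x y = O.star (ip y x)
  ip_pos : ∀ x : E, ip x x ∈ O.pos
  definite : ∀ x : E, ip x x = 0 → x = 0

/-- An increasing seminorm on the ordered *-space `Z`. -/
structure IncSeminorm {Z : Type*} [AddCommGroup Z] [Module ℂ Z]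
    (O : OrderedStarSpace Z) where
  p : Z → ℝ
  nonneg : ∀ x : Z, 0 ≤ p x
  add_le : ∀ x y : Z, p (x + y) ≤ p x + p y
  smul : ∀ (c : ℂ) (x : Z), p (c • x) = ‖c‖ * p x
  mono : ∀ x y : Z, x ∈ O.pos → y - x ∈ O.pos → p x ≤ p y

/-!
Writing `q = p([h,h])` and `xₙ = p([T^{2ⁿ}h, h])`, the Schwarz inequality for positive gramians
together with `[T^{2ⁿ⁺¹}h, h] = [T^{2ⁿ}h, T^{2ⁿ}h]` gives `xₙ² ≤ xₙ₊₁ q`, hence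
`x₀^{2ⁿ} ≤ xₙ q^{2ⁿ-1}`, while m-topologisability bounds `xₙ₊₁` by `D^{2ⁿ⁺¹} r(h)²`. Taking
`2ⁿ`-th roots and letting `n → ∞` leaves `x₀ ≤ D q`.
-/

open Filter Topology

theorem sq_le_mul_of_two_mul_le_add {s a b : ℝ} (hs : 0 ≤ s) (hb : 0 ≤ b)
    (h : ∀ u : ℝ, 0 ≤ u → 2 * u * s ≤ a + u ^ 2 * b) : s ^ 2 ≤ a * b := by
  have hdiscrim : discrim b (-2 * s) a ≤ 0 := by
    -- the hypothesis holds trivially for `u ≤ 0`, so `b u² - 2 s u + a ≥ 0` on all of `ℝ`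
    refine discrim_le_zero fun u => ?_
    rcases le_total 0 u with hu | hu
    · nlinarith [h u hu]
    · nlinarith [h 0 le_rfl, mul_nonneg hb (mul_self_nonneg u)]
  rw [discrim] at hdiscrim
  nlinarith

theorem le_of_pow_le_mul_pow {a b C : ℝ} {N : ℕ → ℕ} (hb : 0 ≤ b)
    (hN : Tendsto N atTop atTop) (h : ∀ n, a ^ N n ≤ C * b ^ N n) : a ≤ b := by
  by_contra! hba
  have ha : 0 < a := hb.trans_lt hba
  have hlim : Tendsto (fun n => C * (b / a) ^ N n) atTop (𝓝 0) := by
    simpa using ((tendsto_pow_atTop_nhds_zero_of_lt_one (div_nonneg hb ha.le)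
      ((div_lt_one ha).2 hba)).comp hN).const_mul C
  obtain ⟨n, hn⟩ := (hlim.eventually (gt_mem_nhds one_pos)).exists
  rw [div_pow, ← mul_div_assoc, div_lt_one (pow_pos ha _)] at hn
  exact (h n).not_gt hn

theorem pow_two_pow_le_of_sq_le_succ {y : ℕ → ℝ} (hy : 0 ≤ y 0)
    (h : ∀ n, y n ^ 2 ≤ y (n + 1)) (n : ℕ) : y 0 ^ 2 ^ n ≤ y n := by
  induction n with
  | zero => simp
  | succ n ih =>
    calc y 0 ^ 2 ^ (n + 1) = (y 0 ^ 2 ^ n) ^ 2 := by rw [pow_succ, pow_mul]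
      _ ≤ y n ^ 2 := pow_le_pow_left₀ (by positivity) ih 2
      _ ≤ y (n + 1) := h n

theorem le_mul_of_sq_le_succ_mul {x : ℕ → ℝ} {q D C : ℝ} (hx : ∀ n, 0 ≤ x n) (hq : 0 ≤ q)
    (hD : 0 ≤ D) (hstep : ∀ n, x n ^ 2 ≤ x (n + 1) * q)
    (hbound : ∀ n, x (n + 1) ≤ C * D ^ 2 ^ (n + 1)) : x 0 ≤ D * q := by
  rcases hq.eq_or_lt with rfl | hq
  · have : x 0 ^ 2 ≤ 0 := by simpa using hstep 0
    nlinarith [hx 0]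
  set y : ℕ → ℝ := fun n => x n / q
  have hystep (n : ℕ) : y n ^ 2 ≤ y (n + 1) := by
    simp only [y]
    rw [div_pow, div_le_div_iff₀ (by positivity) hq]
    nlinarith [hstep n]
  have hybound (n : ℕ) : y 0 ^ 2 ^ (n + 1) ≤ C / q * D ^ 2 ^ (n + 1) := by
    calc y 0 ^ 2 ^ (n + 1) ≤ y (n + 1) :=
          pow_two_pow_le_of_sq_le_succ (div_nonneg (hx 0) hq.le) hystep (n + 1)
      _ ≤ C * D ^ 2 ^ (n + 1) / q := div_le_div_of_nonneg_right (hbound n) hq.le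
      _ = C / q * D ^ 2 ^ (n + 1) := by ring
  have hN : Tendsto (fun n : ℕ => 2 ^ (n + 1)) atTop atTop :=
    (tendsto_pow_atTop_atTop_of_one_lt one_lt_two).comp (tendsto_add_atTop_nat 1)
  exact (div_le_iff₀ hq).1 (le_of_pow_le_mul_pow hD hN hybound)

namespace IncSeminorm

variable {Z : Type*} [AddCommGroup Z] [Module ℂ Z] {O : OrderedStarSpace Z} (N : IncSeminorm O)

theorem p_ofReal_smul (t : ℝ) (z : Z) : N.p ((t : ℂ) • z) = |t| * N.p z := by
  rw [N.smul, Complex.norm_real, Real.norm_eq_abs]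

end IncSeminorm

namespace VEGramian

variable {Z E : Type*} [AddCommGroup Z] [Module ℂ Z] [AddCommGroup E] [Module ℂ E]
  {O : OrderedStarSpace Z} (G : VEGramian O E)

theorem ip_add_left (x y z : E) : G.ip (x + y) z = G.ip x z + G.ip y z := by
  rw [G.herm, G.add_right, O.star_add, ← G.herm, ← G.herm]

theorem ip_smul_left (c : ℂ) (x y : E) : G.ip (c • x) y = (starRingEnd ℂ) c • G.ip x y := by
  rw [G.herm, G.smul_right, O.star_smul, ← G.herm]

theorem ip_add_ofReal_smul_self (t : ℝ) (x y : E) :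
    G.ip (x + (t : ℂ) • y) (x + (t : ℂ) • y) =
      G.ip x x + (t : ℂ) • (G.ip x y + G.ip y x) + ((t ^ 2 : ℝ) : ℂ) • G.ip y y := by
  simp only [G.add_right, G.ip_add_left, G.smul_right, G.ip_smul_left, Complex.conj_ofReal,
    smul_add, smul_smul]
  push_cast
  module

theorem two_mul_p_ip_le (N : IncSeminorm O) {g h : E} (hgh : G.ip g h ∈ O.pos) {u : ℝ}
    (hu : 0 ≤ u) :
    2 * u * N.p (G.ip g h) ≤ N.p (G.ip g g) + u ^ 2 * N.p (G.ip h h) := by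
  have hhg : G.ip h g = G.ip g h := by rw [G.herm h g, O.pos_selfadjoint _ hgh]
  have hdiff : (G.ip g g + ((u ^ 2 : ℝ) : ℂ) • G.ip h h) - ((2 * u : ℝ) : ℂ) • G.ip g h
      ∈ O.pos := by
    convert G.ip_pos (g + ((-u : ℝ) : ℂ) • h) using 1
    rw [G.ip_add_ofReal_smul_self, hhg]
    push_cast
    module
  calc 2 * u * N.p (G.ip g h) = N.p (((2 * u : ℝ) : ℂ) • G.ip g h) := by
        rw [N.p_ofReal_smul, abs_of_nonneg (by positivity)]
    _ ≤ N.p (G.ip g g + ((u ^ 2 : ℝ) : ℂ) • G.ip h h) :=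
        N.mono _ _ (O.pos_smul _ (by positivity) _ hgh) hdiff
    _ ≤ N.p (G.ip g g) + u ^ 2 * N.p (G.ip h h) := by
        grw [N.add_le, N.p_ofReal_smul, abs_of_nonneg (by positivity)]

theorem sq_p_ip_le (N : IncSeminorm O) {g h : E} (hgh : G.ip g h ∈ O.pos) :
    N.p (G.ip g h) ^ 2 ≤ N.p (G.ip g g) * N.p (G.ip h h) :=
  sq_le_mul_of_two_mul_le_add (N.nonneg _) (N.nonneg _) fun _ hu => G.two_mul_p_ip_le N hgh hu

variable {G} {T : Module.End ℂ E}

theorem ip_pow_apply_left (hT : ∀ x y : E, G.ip (T x) y = G.ip x (T y)) (m : ℕ) (x y : E) :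
    G.ip ((T ^ m) x) y = G.ip x ((T ^ m) y) := by
  induction m generalizing x y with
  | zero => rfl
  | succ m ih =>
    rw [pow_succ, Module.End.mul_apply, ih, hT, ← Module.End.mul_apply, ← pow_succ', pow_succ]

theorem ip_pow_two_pow_succ_apply (hT : ∀ x y : E, G.ip (T x) y = G.ip x (T y)) (n : ℕ)
    (x : E) : G.ip ((T ^ 2 ^ (n + 1)) x) x = G.ip ((T ^ 2 ^ n) x) ((T ^ 2 ^ n) x) := by
  rw [pow_succ, mul_two, pow_add, Module.End.mul_apply, ip_pow_apply_left hT]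

end VEGramian

theorem mtopologisable_positive_operator_bound_general {Z E : Type*}
    [AddCommGroup Z] [Module ℂ Z]
    [AddCommGroup E] [Module ℂ E]
    (O : OrderedStarSpace Z) (N : IncSeminorm O) (G : VEGramian O E)
    (T : Module.End ℂ E)
    (hTpos : ∀ h : E, G.ip (T h) h ∈ O.pos)
    (hTsa : ∀ h g : E, G.ip (T h) g = G.ip h (T g))
    (D : ℝ) (hD : 0 ≤ D) (r : E → ℝ)
    (hmtop : ∀ (n : ℕ) (h : E),
      Real.sqrt (N.p (G.ip ((T ^ n) h) ((T ^ n) h))) ≤ D ^ n * r h) :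
    ∀ h : E, N.p (G.ip (T h) h) ≤ D * N.p (G.ip h h) := by
  intro h
  have hdouble := fun n => VEGramian.ip_pow_two_pow_succ_apply hTsa n h
  have hpos (n : ℕ) : G.ip ((T ^ 2 ^ n) h) h ∈ O.pos := by
    cases n with
    | zero => simpa using hTpos h
    | succ n => rw [hdouble]; exact G.ip_pos _
  have hstep (n : ℕ) : N.p (G.ip ((T ^ 2 ^ n) h) h) ^ 2 ≤
      N.p (G.ip ((T ^ 2 ^ (n + 1)) h) h) * N.p (G.ip h h) := by
    rw [hdouble]
    exact G.sq_p_ip_le N (hpos n)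
  have hbound (n : ℕ) : N.p (G.ip ((T ^ 2 ^ (n + 1)) h) h) ≤ r h ^ 2 * D ^ 2 ^ (n + 1) := by
    rw [hdouble, pow_succ 2 n, pow_mul, mul_comm, ← mul_pow]
    exact (Real.sqrt_le_iff.1 (hmtop _ h)).2
  have key := le_mul_of_sq_le_succ_mul (x := fun n => N.p (G.ip ((T ^ 2 ^ n) h) h))
    (fun _ => N.nonneg _) (N.nonneg _) hD hstep hbound
  rwa [pow_zero, pow_one] at key

/-- Krein–Reid–Lax–Dieudonné-type inequality: if `T` is a positive
selfadjoint operator on a VE-space `H` over a topologically ordered *-space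
that is m-topologisable for the increasing seminorm `p` (i.e.
`p([Tⁿh,Tⁿh])^{1/2} ≤ Dⁿ r(h)` for some `D ≥ 0` and `r : H → [0,∞)`), then
`p([Th,h]) ≤ D p([h,h])`. -/
theorem mtopologisable_positive_operator_bound {Z E : Type*}
    [AddCommGroup Z] [Module ℂ Z] [TopologicalSpace Z]
    [AddCommGroup E] [Module ℂ E]
    (O : OrderedStarSpace Z) (N : IncSeminorm O) (G : VEGramian O E)
    (T : Module.End ℂ E)
    (hTpos : ∀ h : E, G.ip (T h) h ∈ O.pos)
    (hTsa : ∀ h g : E, G.ip (T h) g = G.ip h (T g))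
    (D : ℝ) (hD : 0 ≤ D) (r : E → ℝ) (hr : ∀ h : E, 0 ≤ r h)
    (hmtop : ∀ (n : ℕ) (h : E),
      Real.sqrt (N.p (G.ip ((T ^ n) h) ((T ^ n) h))) ≤ D ^ n * r h) :
    ∀ h : E, N.p (G.ip (T h) h) ≤ D * N.p (G.ip h h) :=
  mtopologisable_positive_operator_bound_general O N G T hTpos hTsa D hD r hmtop
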